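/- arXiv:2511.11375 — 7 statements merged into one kernel-verified Lean document; each statement's English description precedes it below -/
import Mathlib

section
/- Let H be a hypergraph, let Y = {e₁,...,e_y} be a set of pairwise-disjoint edges, and for a set of edges R define F(R) = {f ∈ E(H) : f ∉ R and f intersects ⋃R}. For f ∈ F(Y) let mult(f) be the number of e ∈ Y with f ∈ F({e}). If edges are selected independently with probability p each to form a random set X, and M is the set of selected edges disjoint from all other selected edges, then P[Y ⊆ M] = (∏_{e∈Y} P[e ∈ M]) · (1-p)^{-Σ_{f∈F(Y)}(mult(f)-1)}. In particular P[Y ⊆ M] ≥ ∏_{e∈Y} P[e ∈ M]. -/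
open scoped Classical

/-- The probability, when each edge of `EH` is kept independently with probability `p`,
of the event `A` (an event depends only on the random set of kept edges). -/
noncomputable def prEdges {V : Type*} [DecidableEq V] (EH : Finset (Finset V)) (p : ℝ)
    (A : Finset (Finset V) → Prop) : ℝ :=
  ∑ X ∈ EH.powerset.filter A, p ^ X.card * (1 - p) ^ (EH.card - X.card)

/-- The set `M` of selected edges which are disjoint from all other selected edges. -/
def isolatedEdges {V : Type*} [DecidableEq V] (X : Finset (Finset V)) : Finset (Finset V) :=
  X.filter fun e => ∀ f ∈ X, f ≠ e → Disjoint f e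

lemma sum_powerset_pow {α : Type*} [DecidableEq α] (s : Finset α) (p q : ℝ) :
    ∑ t ∈ s.powerset, p ^ t.card * q ^ (s.card - t.card) = (p + q) ^ s.card := by
  rw [← Finset.prod_const, Finset.prod_add]
  apply Finset.sum_congr rfl
  intro t ht
  rw [Finset.mem_powerset] at ht
  rw [Finset.prod_const, Finset.prod_const, Finset.card_sdiff_of_subset ht]

lemma prEdges_congr {V : Type*} [DecidableEq V] (EH : Finset (Finset V)) (p : ℝ)
    (A B : Finset (Finset V) → Prop) (h : ∀ X ⊆ EH, (A X ↔ B X)) :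
    prEdges EH p A = prEdges EH p B := by
  unfold prEdges
  apply Finset.sum_congr _ (fun _ _ => rfl)
  ext X
  simp only [Finset.mem_filter, Finset.mem_powerset]
  exact and_congr_right fun hX => h X hX

lemma prEdges_subset_compl {V : Type*} [DecidableEq V] (EH : Finset (Finset V)) (p : ℝ)
    (S T : Finset (Finset V)) (hS : S ⊆ EH) (hT : T ⊆ EH) (hST : Disjoint S T) :
    prEdges EH p (fun X => S ⊆ X ∧ ∀ f ∈ T, f ∉ X) =
      p ^ S.card * (1 - p) ^ T.card := by
  set B := (EH \ S) \ T with hB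
  have hBcard : B.card + S.card + T.card = EH.card := by
    have h1 : T ⊆ EH \ S := fun x hx =>
      Finset.mem_sdiff.mpr ⟨hT hx, fun hxS => (Finset.disjoint_left.mp hST hxS) hx⟩
    have h2 : (EH \ S).card = EH.card - S.card := Finset.card_sdiff_of_subset hS
    have h3 : B.card = (EH \ S).card - T.card := Finset.card_sdiff_of_subset h1
    have h4 : S.card ≤ EH.card := Finset.card_le_card hS
    have h5 : T.card ≤ (EH \ S).card := Finset.card_le_card h1
    omega
  have key : prEdges EH p (fun X => S ⊆ X ∧ ∀ f ∈ T, f ∉ X)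
      = ∑ X' ∈ B.powerset,
        (p ^ S.card * (1 - p) ^ T.card) * (p ^ X'.card * (1 - p) ^ (B.card - X'.card)) := by
    unfold prEdges
    refine Finset.sum_nbij' (fun X => X \ S) (fun X' => X' ∪ S) ?_ ?_ ?_ ?_ ?_
    · intro X hX
      simp only [Finset.mem_filter, Finset.mem_powerset] at hX
      obtain ⟨hXE, hSX, hXT⟩ := hX
      rw [Finset.mem_powerset]
      intro x hx
      rw [Finset.mem_sdiff] at hx
      exact Finset.mem_sdiff.mpr ⟨Finset.mem_sdiff.mpr ⟨hXE hx.1, hx.2⟩,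
        fun hxT => hXT x hxT hx.1⟩
    · intro X' hX'
      rw [Finset.mem_powerset] at hX'
      simp only [Finset.mem_filter, Finset.mem_powerset]
      refine ⟨?_, Finset.subset_union_right, ?_⟩
      · intro x hx
        rcases Finset.mem_union.mp hx with h | h
        · exact (Finset.mem_sdiff.mp (Finset.mem_sdiff.mp (hX' h)).1).1
        · exact hS h
      · intro f hf hfX
        rcases Finset.mem_union.mp hfX with h | h
        · exact (Finset.mem_sdiff.mp (hX' h)).2 hf
        · exact (Finset.disjoint_left.mp hST h) hf
    · intro X hX
      simp only [Finset.mem_filter, Finset.mem_powerset] at hX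
      exact Finset.sdiff_union_of_subset hX.2.1
    · intro X' hX'
      rw [Finset.mem_powerset] at hX'
      apply Finset.union_sdiff_cancel_right
      exact Finset.disjoint_left.mpr fun x hx =>
        (Finset.mem_sdiff.mp (Finset.mem_sdiff.mp (hX' hx)).1).2
    · intro X hX
      simp only [Finset.mem_filter, Finset.mem_powerset] at hX
      obtain ⟨hXE, hSX, hXT⟩ := hX
      have hXS : X \ S ⊆ B := by
        intro x hx
        rw [Finset.mem_sdiff] at hx
        exact Finset.mem_sdiff.mpr ⟨Finset.mem_sdiff.mpr ⟨hXE hx.1, hx.2⟩,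
          fun hxT => hXT x hxT hx.1⟩
      have hc1 : (X \ S).card + S.card = X.card := Finset.card_sdiff_add_card_eq_card hSX
      have hc2 : (X \ S).card ≤ B.card := Finset.card_le_card hXS
      have hc3 : X.card ≤ EH.card := Finset.card_le_card hXE
      have he1 : X.card = (X \ S).card + S.card := hc1.symm
      have he2 : EH.card - X.card = T.card + (B.card - (X \ S).card) := by omega
      rw [he2, he1]
      simp only [pow_add]
      ring
  rw [key, ← Finset.mul_sum, sum_powerset_pow]
  simp

lemma counting {V : Type*} [DecidableEq V] (EH : Finset (Finset V))
    (Y : Finset (Finset V))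
    (hdisj : ∀ e ∈ Y, ∀ f ∈ Y, e ≠ f → Disjoint e f) :
    ∑ e ∈ Y, (EH.filter (fun f => f ≠ e ∧ ¬ Disjoint f e)).card =
      (EH.filter (fun f => f ∉ Y ∧ ∃ e ∈ Y, ¬ Disjoint f e)).card +
      ∑ f ∈ EH.filter (fun f => f ∉ Y ∧ ∃ e ∈ Y, ¬ Disjoint f e),
        ((Y.filter fun e => ¬ Disjoint f e).card - 1) := by
  set FY := EH.filter (fun f => f ∉ Y ∧ ∃ e ∈ Y, ¬ Disjoint f e) with hFY
  have step1 : ∑ e ∈ Y, (EH.filter (fun f => f ≠ e ∧ ¬ Disjoint f e)).card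
      = ∑ f ∈ EH, (Y.filter (fun e => f ≠ e ∧ ¬ Disjoint f e)).card := by
    simp only [Finset.card_filter]
    rw [Finset.sum_comm]
  have vanish : ∀ f ∈ EH, f ∉ FY → (Y.filter (fun e => f ≠ e ∧ ¬ Disjoint f e)).card = 0 := by
    intro f hfE hfFY
    rw [hFY, Finset.mem_filter, not_and, not_and, not_exists] at hfFY
    rw [Finset.card_eq_zero, Finset.filter_eq_empty_iff]
    intro e he
    simp only [not_and, not_not]
    intro hne
    by_cases hfy : f ∈ Y
    · exact hdisj f hfy e he hne
    · exact not_not.mp (fun h => hfFY hfE hfy e ⟨he, h⟩)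
  have step2 : ∑ f ∈ EH, (Y.filter (fun e => f ≠ e ∧ ¬ Disjoint f e)).card
      = ∑ f ∈ FY, (Y.filter (fun e => f ≠ e ∧ ¬ Disjoint f e)).card :=
    (Finset.sum_subset (Finset.filter_subset _ EH) vanish).symm
  have step3 : ∀ f ∈ FY, (Y.filter (fun e => f ≠ e ∧ ¬ Disjoint f e)).card
      = (Y.filter (fun e => ¬ Disjoint f e)).card := by
    intro f hf
    rw [hFY, Finset.mem_filter] at hf
    congr 1
    apply Finset.filter_congr
    intro e he
    simp only [and_iff_right_iff_imp]
    exact fun _ h => hf.2.1 (h ▸ he)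
  have mult_pos : ∀ f ∈ FY, 1 ≤ (Y.filter (fun e => ¬ Disjoint f e)).card := by
    intro f hf
    rw [hFY, Finset.mem_filter] at hf
    obtain ⟨e, he, hde⟩ := hf.2.2
    exact Finset.card_pos.mpr ⟨e, Finset.mem_filter.mpr ⟨he, hde⟩⟩
  rw [step1, step2, Finset.sum_congr rfl step3, Finset.card_eq_sum_ones FY,
    ← Finset.sum_add_distrib]
  apply Finset.sum_congr rfl
  intro f hf
  have := mult_pos f hf
  omega

/-- For pairwise-disjoint edges Y, P[Y ⊆ M] = (∏_{e∈Y} P[e ∈ M]) · (1-p)^{-Σ_{f∈F(Y)}(mult(f)-1)};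
in particular P[Y ⊆ M] ≥ ∏_{e∈Y} P[e ∈ M]. -/
theorem stmt_2 {V : Type*} [DecidableEq V] (EH : Finset (Finset V)) (p : ℝ)
    (hp0 : 0 < p) (hp1 : p < 1)
    (Y : Finset (Finset V)) (hYE : Y ⊆ EH)
    (hdisj : ∀ e ∈ Y, ∀ f ∈ Y, e ≠ f → Disjoint e f) :
    prEdges EH p (fun X => Y ⊆ isolatedEdges X) =
      (∏ e ∈ Y, prEdges EH p (fun X => e ∈ isolatedEdges X)) /
        (1 - p) ^ (∑ f ∈ EH.filter (fun f => f ∉ Y ∧ ∃ e ∈ Y, ¬ Disjoint f e),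
            ((Y.filter fun e => ¬ Disjoint f e).card - 1)) ∧
    (∏ e ∈ Y, prEdges EH p (fun X => e ∈ isolatedEdges X)) ≤
      prEdges EH p (fun X => Y ⊆ isolatedEdges X) := by
  have hq0 : (0:ℝ) < 1 - p := by linarith
  have hq1 : (1:ℝ) - p ≤ 1 := by linarith
  set FY := EH.filter (fun f => f ∉ Y ∧ ∃ e ∈ Y, ¬ Disjoint f e) with hFYdef
  set K := ∑ f ∈ FY, ((Y.filter fun e => ¬ Disjoint f e).card - 1) with hK
  -- LHS computation
  have hLHS : prEdges EH p (fun X => Y ⊆ isolatedEdges X)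
      = p ^ Y.card * (1 - p) ^ FY.card := by
    rw [← prEdges_subset_compl EH p Y FY hYE (Finset.filter_subset _ _)
      (Finset.disjoint_left.mpr fun a haY haF =>
        ((Finset.mem_filter.mp haF).2.1 haY))]
    apply prEdges_congr
    intro X hX
    constructor
    · intro h
      refine ⟨fun e he => (Finset.mem_filter.mp (h he)).1, ?_⟩
      intro f hf hfX
      rw [hFYdef, Finset.mem_filter] at hf
      obtain ⟨hfE, hfY, e, he, hde⟩ := hf
      exact hde ((Finset.mem_filter.mp (h he)).2 f hfX (fun h' => hfY (h' ▸ he)))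
    · rintro ⟨hYX, hFX⟩ e he
      rw [isolatedEdges, Finset.mem_filter]
      refine ⟨hYX he, ?_⟩
      intro g hg hge
      by_cases hgY : g ∈ Y
      · exact hdisj g hgY e he hge
      · by_contra hnd
        exact hFX g (Finset.mem_filter.mpr ⟨hX hg, hgY, e, he, hnd⟩) hg
  -- per-edge computation
  have hEach : ∀ e ∈ Y, prEdges EH p (fun X => e ∈ isolatedEdges X)
      = p * (1 - p) ^ (EH.filter (fun f => f ≠ e ∧ ¬ Disjoint f e)).card := by
    intro e he
    have hd : Disjoint {e} (EH.filter (fun f => f ≠ e ∧ ¬ Disjoint f e)) :=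
      Finset.disjoint_left.mpr (by
        intro a ha haf
        rw [Finset.mem_singleton] at ha
        exact (Finset.mem_filter.mp haf).2.1 ha)
    have h := prEdges_subset_compl EH p {e} (EH.filter (fun f => f ≠ e ∧ ¬ Disjoint f e))
      (Finset.singleton_subset_iff.mpr (hYE he)) (Finset.filter_subset _ _) hd
    rw [Finset.card_singleton, pow_one] at h
    rw [← h]
    apply prEdges_congr
    intro X hX
    constructor
    · intro hiso
      rw [isolatedEdges, Finset.mem_filter] at hiso
      refine ⟨Finset.singleton_subset_iff.mpr hiso.1, ?_⟩
      intro f hf hfX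
      rw [Finset.mem_filter] at hf
      exact hf.2.2 (hiso.2 f hfX hf.2.1)
    · rintro ⟨heX, hFX⟩
      rw [isolatedEdges, Finset.mem_filter]
      refine ⟨Finset.singleton_subset_iff.mp heX, ?_⟩
      intro g hg hge
      by_contra hnd
      exact hFX g (Finset.mem_filter.mpr ⟨hX hg, hge, hnd⟩) hg
  -- product computation
  have hProd : (∏ e ∈ Y, prEdges EH p (fun X => e ∈ isolatedEdges X))
      = p ^ Y.card * (1 - p) ^ (FY.card + K) := by
    rw [Finset.prod_congr rfl hEach, Finset.prod_mul_distrib, Finset.prod_const,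
      Finset.prod_pow_eq_pow_sum, counting EH Y hdisj]
  constructor
  · rw [hLHS, hProd, pow_add, eq_div_iff (pow_ne_zero _ (ne_of_gt hq0))]
    ring
  · rw [hLHS, hProd]
    apply mul_le_mul_of_nonneg_left _ (pow_nonneg hp0.le _)
    exact pow_le_pow_of_le_one hq0.le hq1 (Nat.le_add_right _ _)
end

section
/- Let Y = {e₁,...,e_y} be pairwise-disjoint edges of a hypergraph H, and with F(Y) and mult(f) as defined, we have Σ_{f∈F(Y)}(mult(f)-1) ≤ C(y,2)·(k+1)²·D₂, where H is (k+1)-uniform and D₂ bounds all pairwise codegrees. -/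
private lemma aux_two_mul_sub_one (m : ℕ) : 2 * (m - 1) ≤ m * m - m := by
  rcases m with _ | p
  · simp
  · have h3 : (p+1)*(p+1) = (p+1)*p + (p+1) := by ring
    have h2 : 2*p ≤ (p+1)*p := by
      rcases p with _ | q
      · simp
      · exact Nat.mul_le_mul_right _ (by omega)
    omega

private lemma aux_two_mul_choose (n : ℕ) : 2 * n.choose 2 = n * n - n := by
  induction n with
  | zero => simp
  | succ n ih =>
    have h1 : (n+1).choose 2 = n.choose 1 + n.choose 2 := Nat.choose_succ_succ n 1
    rw [Nat.choose_one_right] at h1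
    have h3 : (n+1)*(n+1) = n*n + 2*n + 1 := by ring
    have hn : n ≤ n*n := by
      rcases n with _ | q
      · simp
      · exact Nat.le_mul_of_pos_left _ (Nat.succ_pos _)
    omega

/-- For pairwise-disjoint edges Y in a (k+1)-uniform hypergraph with pairwise
codegrees at most D₂, we have Σ_{f∈F(Y)}(mult(f)-1) ≤ C(y,2)(k+1)²D₂. -/
theorem stmt_3 {V : Type*} [DecidableEq V] (EH : Finset (Finset V)) (k D₂ : ℕ)
    (huniform : ∀ e ∈ EH, e.card = k + 1)
    (hcodeg : ∀ u v : V, u ≠ v →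
      (EH.filter fun e => u ∈ e ∧ v ∈ e).card ≤ D₂)
    (Y : Finset (Finset V)) (hYE : Y ⊆ EH)
    (hdisj : ∀ e ∈ Y, ∀ f ∈ Y, e ≠ f → Disjoint e f) :
    ∑ f ∈ EH.filter (fun f => f ∉ Y ∧ ∃ e ∈ Y, ¬ Disjoint f e),
        ((Y.filter fun e => ¬ Disjoint f e).card - 1)
      ≤ Y.card.choose 2 * (k + 1) ^ 2 * D₂ := by
  set F := EH.filter (fun f => f ∉ Y ∧ ∃ e ∈ Y, ¬ Disjoint f e) with hF
  have key : 2 * (∑ f ∈ F, ((Y.filter fun e => ¬ Disjoint f e).card - 1))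
      ≤ 2 * (Y.card.choose 2 * (k + 1) ^ 2 * D₂) := by
    calc 2 * (∑ f ∈ F, ((Y.filter fun e => ¬ Disjoint f e).card - 1))
        = ∑ f ∈ F, 2 * ((Y.filter fun e => ¬ Disjoint f e).card - 1) := by
          rw [Finset.mul_sum]
      _ ≤ ∑ f ∈ F, ((Y.filter fun e => ¬ Disjoint f e).offDiag).card := by
          apply Finset.sum_le_sum
          intro f _
          rw [Finset.offDiag_card]
          exact aux_two_mul_sub_one _
      _ = ∑ f ∈ F, (Y.offDiag.filter (fun x => ¬ Disjoint f x.1 ∧ ¬ Disjoint f x.2)).card := by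
          apply Finset.sum_congr rfl
          intro f _
          congr 1
          ext x
          simp only [Finset.mem_offDiag, Finset.mem_filter]
          tauto
      _ = ∑ f ∈ F, ∑ x ∈ Y.offDiag, (if ¬ Disjoint f x.1 ∧ ¬ Disjoint f x.2 then 1 else 0) := by
          apply Finset.sum_congr rfl
          intro f _
          rw [Finset.card_filter]
      _ = ∑ x ∈ Y.offDiag, ∑ f ∈ F, (if ¬ Disjoint f x.1 ∧ ¬ Disjoint f x.2 then 1 else 0) :=
          Finset.sum_comm
      _ = ∑ x ∈ Y.offDiag, (F.filter (fun f => ¬ Disjoint f x.1 ∧ ¬ Disjoint f x.2)).card := by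
          apply Finset.sum_congr rfl
          intro x _
          rw [Finset.card_filter]
      _ ≤ ∑ x ∈ Y.offDiag, (k + 1) ^ 2 * D₂ := by
          apply Finset.sum_le_sum
          rintro ⟨e, e'⟩ hx
          rw [Finset.mem_offDiag] at hx
          obtain ⟨he, he', hne⟩ := hx
          have hde : Disjoint e e' := hdisj e he e' he' hne
          calc (F.filter (fun f => ¬ Disjoint f e ∧ ¬ Disjoint f e')).card
              ≤ ((e ×ˢ e').biUnion (fun uv => EH.filter (fun g => uv.1 ∈ g ∧ uv.2 ∈ g))).card := by
                apply Finset.card_le_card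
                intro f hf
                simp only [Finset.mem_filter, hF] at hf
                obtain ⟨⟨hfE, -⟩, hfe, hfe'⟩ := hf
                rw [Finset.not_disjoint_iff] at hfe hfe'
                obtain ⟨u, huf, hue⟩ := hfe
                obtain ⟨v, hvf, hve'⟩ := hfe'
                rw [Finset.mem_biUnion]
                exact ⟨(u, v), Finset.mk_mem_product hue hve', by
                  simp only [Finset.mem_filter]; exact ⟨hfE, huf, hvf⟩⟩
            _ ≤ ∑ uv ∈ e ×ˢ e', (EH.filter (fun g => uv.1 ∈ g ∧ uv.2 ∈ g)).card :=
                Finset.card_biUnion_le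
            _ ≤ ∑ uv ∈ e ×ˢ e', D₂ := by
                apply Finset.sum_le_sum
                rintro ⟨u, v⟩ huv
                rw [Finset.mem_product] at huv
                have huvne : u ≠ v := fun h => by
                  exact (Finset.disjoint_left.mp hde huv.1) (h ▸ huv.2)
                exact hcodeg u v huvne
            _ = (k + 1) ^ 2 * D₂ := by
                rw [Finset.sum_const, Finset.card_product, smul_eq_mul,
                  huniform e (hYE he), huniform e' (hYE he'), sq]
      _ = Y.offDiag.card * ((k + 1) ^ 2 * D₂) := by rw [Finset.sum_const, smul_eq_mul]
      _ = 2 * (Y.card.choose 2 * (k + 1) ^ 2 * D₂) := by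
          rw [Finset.offDiag_card, ← aux_two_mul_choose]
          ring
  omega
end

section
/- Let A be a set of r vertices in a (k+1)-uniform hypergraph H with maximum degree Δ and pairwise codegrees at most D₂, where 2 ≤ r ≤ k, and let j ∈ [r-1]. Define an A-cover of size j as a set of j pairwise-disjoint edges each intersecting A whose union contains A. Then the number of A-covers of size j is at most C(r,2)·(k+1)^{2k}·D₂·Δ^{j-1}. -/
open scoped Classical

/-!
Every cover `C` of `A` by `j < |A|` disjoint edges has an edge containing two vertices `P` of `A`
(pigeonhole), and a set `R ⊆ A` of `j` representatives, one in each edge. Given `P`, `R` and the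
representative `u` of the edge through `P`, the cover is the image of a map sending `u` to an edge
containing `P` (at most `D₂` choices) and every other `x ∈ R` to an edge containing `x` (at most
`Δ` choices). Summing over the at most `C(r,2) · C(r,j) · r` triples `(P, R, u)` gives the bound,
since `C(r,j) · r ≤ 4 ^ r ≤ (k+1) ^ (2k)`.
-/

theorem Finset.card_le_prod_of_forall_eq_image {α β : Type*} [DecidableEq α] [DecidableEq β]
    (R : Finset α) (F : α → Finset β) (𝒞 : Finset (Finset β))
    (h : ∀ C ∈ 𝒞, ∃ g : α → β, (∀ x ∈ R, g x ∈ F x) ∧ C = R.image g) :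
    𝒞.card ≤ ∏ x ∈ R, (F x).card := by
  calc 𝒞.card ≤ ((R.pi F).image fun f => R.attach.image fun x => f x.1 x.2).card := by
        refine Finset.card_le_card fun C hC => ?_
        obtain ⟨g, hgF, rfl⟩ := h C hC
        refine Finset.mem_image.2 ⟨fun x _ => g x, Finset.mem_pi.2 hgF, ?_⟩
        exact Finset.image_image.symm.trans (congrArg _ Finset.attach_image_val)
    _ ≤ (R.pi F).card := Finset.card_image_le
    _ = ∏ x ∈ R, (F x).card := Finset.card_pi R F

namespace Hypergraph

variable {α : Type*} [DecidableEq α]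

theorem exists_pair_subset_of_card_lt {A : Finset α} {C : Finset (Finset α)} (hA : A ⊆ C.sup id)
    (hlt : C.card < A.card) : ∃ e ∈ C, ∃ P ⊆ A, P.card = 2 ∧ P ⊆ e := by
  by_contra! h
  have hsmall : ∀ e ∈ C, (e ∩ A).card ≤ 1 := fun e he => by
    by_contra! hbig
    obtain ⟨P, hP, hP2⟩ := Finset.exists_subset_card_eq hbig
    exact h e he P (hP.trans Finset.inter_subset_right) hP2 (hP.trans Finset.inter_subset_left)
  have hcover : A ⊆ C.biUnion (· ∩ A) := fun x hx => by
    obtain ⟨e, he, hxe⟩ := Finset.mem_sup.1 (hA hx)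
    exact Finset.mem_biUnion.2 ⟨e, he, Finset.mem_inter.2 ⟨hxe, hx⟩⟩
  have := (Finset.card_le_card hcover).trans (Finset.card_biUnion_le_card_mul C _ 1 hsmall)
  omega

def IsCover (A : Finset α) (C : Finset (Finset α)) : Prop :=
  (∀ e ∈ C, ¬ Disjoint e A) ∧ (∀ e ∈ C, ∀ f ∈ C, e ≠ f → Disjoint e f) ∧ A ⊆ C.sup id

namespace IsCover

variable {A : Finset α} {C : Finset (Finset α)}

theorem eq_of_mem (hC : IsCover A C) {e f : Finset α} (he : e ∈ C) (hf : f ∈ C) {x : α}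
    (hxe : x ∈ e) (hxf : x ∈ f) : e = f := by
  by_contra hne
  exact Finset.disjoint_left.1 (hC.2.1 e he f hf hne) hxe hxf

theorem exists_mem_of_mem (hC : IsCover A C) {x : α} (hx : x ∈ A) : ∃ e ∈ C, x ∈ e := by
  simpa using Finset.mem_sup.1 (hC.2.2 hx)

theorem eq_image (hC : IsCover A C) {g : α → Finset α} (hg : ∀ x ∈ A, g x ∈ C ∧ x ∈ g x) :
    C = A.image g := by
  ext e
  refine ⟨fun he => ?_, ?_⟩
  · obtain ⟨x, hxe, hxA⟩ := Finset.not_disjoint_iff.1 (hC.1 e he)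
    exact Finset.mem_image.2 ⟨x, hxA, (hC.eq_of_mem (hg x hxA).1 he (hg x hxA).2 hxe)⟩
  · intro he
    obtain ⟨x, hxA, rfl⟩ := Finset.mem_image.1 he
    exact (hg x hxA).1

theorem exists_transversal (hC : IsCover A C) : ∃ R ⊆ A, R.card = C.card ∧ IsCover R C := by
  choose rep hrep using fun e : C => Finset.not_disjoint_iff.1 (hC.1 e e.2)
  refine ⟨C.attach.image rep, ?_, ?_, ?_, hC.2.1, ?_⟩
  · intro x hx
    obtain ⟨e, -, rfl⟩ := Finset.mem_image.1 hx
    exact (hrep e).2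
  · refine (Finset.card_image_of_injective _ fun e f hef => ?_).trans C.card_attach
    exact Subtype.ext (hC.eq_of_mem e.2 f.2 (hrep e).1 (hef ▸ (hrep f).1))
  · exact fun e he => Finset.not_disjoint_iff.2
      ⟨rep ⟨e, he⟩, (hrep _).1, Finset.mem_image_of_mem rep (Finset.mem_attach _ _)⟩
  · intro x hx
    obtain ⟨e, -, rfl⟩ := Finset.mem_image.1 hx
    exact Finset.mem_sup.2 ⟨e, e.2, (hrep e).1⟩

theorem exists_pair_transversal (hC : IsCover A C) (hlt : C.card < A.card) :
    ∃ P ⊆ A, P.card = 2 ∧ ∃ R ⊆ A, R.card = C.card ∧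
      ∃ u ∈ R, IsCover R C ∧ ∃ e ∈ C, u ∈ e ∧ P ⊆ e := by
  obtain ⟨e, he, P, hPA, hP, hPe⟩ := exists_pair_subset_of_card_lt hC.2.2 hlt
  obtain ⟨R, hRA, hR, hRC⟩ := hC.exists_transversal
  obtain ⟨u, hue, huR⟩ := Finset.not_disjoint_iff.1 (hRC.1 e he)
  exact ⟨P, hPA, hP, R, hRA, hR, u, huR, hRC, e, he, hue, hPe⟩

end IsCover

theorem card_filter_subset_le_of_card_eq_two {EH : Finset (Finset α)} {D₂ : ℕ}
    (hcodeg : ∀ u v : α, u ≠ v → (EH.filter fun e => u ∈ e ∧ v ∈ e).card ≤ D₂)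
    {P : Finset α} (hP : P.card = 2) : (EH.filter fun e => P ⊆ e).card ≤ D₂ := by
  obtain ⟨u, v, huv, rfl⟩ := Finset.card_eq_two.1 hP
  simpa only [Finset.insert_subset_iff, Finset.singleton_subset_iff] using hcodeg u v huv

theorem card_le_of_forall_isCover {EH : Finset (Finset α)} {Δ D₂ : ℕ}
    (hΔ : ∀ v : α, (EH.filter fun e => v ∈ e).card ≤ Δ) {P R : Finset α} {u : α}
    (hP : (EH.filter fun e => P ⊆ e).card ≤ D₂) (hu : u ∈ R) (𝒞 : Finset (Finset (Finset α)))
    (h𝒞 : ∀ C ∈ 𝒞, C ⊆ EH ∧ IsCover R C ∧ ∃ e ∈ C, u ∈ e ∧ P ⊆ e) :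
    𝒞.card ≤ D₂ * Δ ^ (R.card - 1) := by
  set F : α → Finset (Finset α) := fun x =>
    if x = u then EH.filter fun e => P ⊆ e else EH.filter fun e => x ∈ e
  calc 𝒞.card ≤ ∏ x ∈ R, (F x).card :=
        Finset.card_le_prod_of_forall_eq_image R F 𝒞 fun C hC => ?_
    _ = (F u).card * ∏ x ∈ R.erase u, (F x).card := (Finset.mul_prod_erase R _ hu).symm
    _ ≤ D₂ * Δ ^ (R.erase u).card := by
        gcongr
        · simpa [F] using hP
        · exact Finset.prod_le_pow_card _ _ _ fun x hx => by
            simpa [F, Finset.ne_of_mem_erase hx] using hΔ x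
    _ = D₂ * Δ ^ (R.card - 1) := by rw [Finset.card_erase_of_mem hu]
  obtain ⟨hCE, hC, e₀, he₀, hue₀, hPe₀⟩ := h𝒞 C hC
  choose! g hgC hxg using fun x (hx : x ∈ R) => hC.exists_mem_of_mem hx
  refine ⟨fun x => if x = u then e₀ else g x, fun x hx => ?_, hC.eq_image fun x hx => ?_⟩
  · by_cases hxu : x = u
    · simpa [F, hxu] using ⟨hCE he₀, hPe₀⟩
    · simpa [F, hxu] using ⟨hCE (hgC x hx), hxg x hx⟩
  · by_cases hxu : x = u
    · subst hxu
      simpa using ⟨he₀, hue₀⟩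
    · simpa [hxu] using ⟨hgC x hx, hxg x hx⟩

end Hypergraph

open Hypergraph

theorem Nat.choose_mul_le_pow_of_le {r k : ℕ} (j : ℕ) (h : r ≤ k) :
    r.choose j * r ≤ (k + 1) ^ (2 * k) := by
  obtain rfl | hk := Nat.eq_zero_or_pos k
  · obtain rfl : r = 0 := by omega
    simp
  calc r.choose j * r ≤ 2 ^ r * 2 ^ r :=
        Nat.mul_le_mul (Nat.choose_le_two_pow r j) Nat.lt_two_pow_self.le
    _ = 4 ^ r := by rw [← mul_pow]; norm_num
    _ ≤ 4 ^ k := Nat.pow_le_pow_right (by norm_num) h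
    _ ≤ ((k + 1) ^ 2) ^ k := Nat.pow_le_pow_left (by nlinarith) k
    _ = (k + 1) ^ (2 * k) := by rw [← pow_mul]

theorem stmt_4_general {V : Type*} [DecidableEq V] (EH : Finset (Finset V)) (k r j Δ D₂ : ℕ)
    (hΔ : ∀ v : V, (EH.filter fun e => v ∈ e).card ≤ Δ)
    (hcodeg : ∀ u v : V, u ≠ v →
      (EH.filter fun e => u ∈ e ∧ v ∈ e).card ≤ D₂)
    (A : Finset V) (hA : A.card = r) (hr2 : 2 ≤ r) (hrk : r ≤ k)
    (hjr : j ≤ r - 1) :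
    (EH.powerset.filter (fun C => C.card = j ∧
        (∀ e ∈ C, ¬ Disjoint e A) ∧
        (∀ e ∈ C, ∀ f ∈ C, e ≠ f → Disjoint e f) ∧
        A ⊆ C.sup id)).card
      ≤ r.choose 2 * (k + 1) ^ (2 * k) * D₂ * Δ ^ (j - 1) := by
  set S := EH.powerset.filter fun C => C.card = j ∧
    (∀ e ∈ C, ¬ Disjoint e A) ∧ (∀ e ∈ C, ∀ f ∈ C, e ≠ f → Disjoint e f) ∧ A ⊆ C.sup id
  set I := (A.powersetCard 2 ×ˢ A.powersetCard j ×ˢ A).filter fun i => i.2.2 ∈ i.2.1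
  set fiber : Finset V × Finset V × V → Finset (Finset (Finset V)) := fun i =>
    S.filter fun C => IsCover i.2.1 C ∧ ∃ e ∈ C, i.2.2 ∈ e ∧ i.1 ⊆ e
  have hS : S ⊆ I.biUnion fiber := fun C hCS => by
    obtain ⟨-, hCj, hC⟩ := Finset.mem_filter.1 hCS
    obtain ⟨P, hPA, hP, R, hRA, hR, u, huR, hRC, hPu⟩ :=
      IsCover.exists_pair_transversal (A := A) hC (by omega)
    refine Finset.mem_biUnion.2 ⟨(P, R, u), ?_, Finset.mem_filter.2 ⟨hCS, hRC, hPu⟩⟩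
    simp [I, Finset.mem_powersetCard, hPA, hP, hRA, hR, hCj, hRA huR, huR]
  have hfiber : ∀ i ∈ I, (fiber i).card ≤ D₂ * Δ ^ (j - 1) := by
    rintro ⟨P, R, u⟩ hi
    simp only [I, Finset.mem_filter, Finset.mem_product, Finset.mem_powersetCard] at hi
    obtain ⟨⟨⟨-, hP⟩, ⟨-, hR⟩, -⟩, hu⟩ := hi
    rw [← hR]
    refine card_le_of_forall_isCover hΔ (card_filter_subset_le_of_card_eq_two hcodeg hP) hu _
      fun C hC => ?_
    obtain ⟨hCS, hRC⟩ := Finset.mem_filter.1 hC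
    exact ⟨Finset.mem_powerset.1 (Finset.mem_filter.1 hCS).1, hRC⟩
  have hI : I.card ≤ r.choose 2 * (r.choose j * r) := by
    refine (Finset.card_filter_le _ _).trans_eq ?_
    simp [Finset.card_product, Finset.card_powersetCard, hA]
  calc S.card ≤ (I.biUnion fiber).card := Finset.card_le_card hS
    _ ≤ I.card * (D₂ * Δ ^ (j - 1)) := Finset.card_biUnion_le_card_mul _ _ _ hfiber
    _ ≤ r.choose 2 * (r.choose j * r) * (D₂ * Δ ^ (j - 1)) := by gcongr
    _ ≤ r.choose 2 * (k + 1) ^ (2 * k) * (D₂ * Δ ^ (j - 1)) := by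
        gcongr
        exact Nat.choose_mul_le_pow_of_le j hrk
    _ = r.choose 2 * (k + 1) ^ (2 * k) * D₂ * Δ ^ (j - 1) := by ring

/-- The number of A-covers of size j (j pairwise-disjoint edges, each meeting A, whose
union contains A) in a (k+1)-uniform hypergraph with maximum degree Δ and pairwise
codegrees at most D₂ is at most C(r,2)·(k+1)^{2k}·D₂·Δ^{j-1}, for |A| = r,
2 ≤ r ≤ k and 1 ≤ j ≤ r-1. -/
theorem stmt_4 {V : Type*} [DecidableEq V] (EH : Finset (Finset V)) (k r j Δ D₂ : ℕ)
    (huniform : ∀ e ∈ EH, e.card = k + 1)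
    (hΔ : ∀ v : V, (EH.filter fun e => v ∈ e).card ≤ Δ)
    (hcodeg : ∀ u v : V, u ≠ v →
      (EH.filter fun e => u ∈ e ∧ v ∈ e).card ≤ D₂)
    (A : Finset V) (hA : A.card = r) (hr2 : 2 ≤ r) (hrk : r ≤ k)
    (hj1 : 1 ≤ j) (hjr : j ≤ r - 1) :
    (EH.powerset.filter (fun C => C.card = j ∧
        (∀ e ∈ C, ¬ Disjoint e A) ∧
        (∀ e ∈ C, ∀ f ∈ C, e ≠ f → Disjoint e f) ∧
        A ⊆ C.sup id)).card
      ≤ r.choose 2 * (k + 1) ^ (2 * k) * D₂ * Δ ^ (j - 1) :=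
  stmt_4_general EH k r j Δ D₂ hΔ hcodeg A hA hr2 hrk hjr
end

section
/- Let 𝓗' be a d-uniform hypergraph (d ≥ 2) whose vertex set is a subset of a linearly ordered set, such that every edge is contained in a window of d+1 consecutive positions. Then every connected component 𝒲 of 𝓗' (on its non-isolated vertices) satisfies e(𝒲) ≤ d(|V(𝒲)| − d) + 1, where V(𝒲) denotes the set of non-isolated vertices of the component. -/
open scoped Classical

/-!
Charge every edge to its largest vertex and add the vertices of `V` one at a time, in increasing
order. An edge charged to `a` lies in `[a - d, a]` and contains `a`, so it is determined by which
of the `d` positions of `[a - d, a)` it omits: each new vertex closes at most `d` edges. As long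
as at most `d` vertices have been added, the only possible edge is the set of all of them.
-/

namespace Finset

theorem card_le_one_of_subset_of_card_le {α : Type*} {d : ℕ} {V : Finset α}
    {W : Finset (Finset α)} (hV : V.card ≤ d) (hsub : ∀ S ∈ W, S ⊆ V)
    (hcard : ∀ S ∈ W, S.card = d) : W.card ≤ 1 := by
  have h_eq_V : ∀ S ∈ W, S = V := fun S hS =>
    eq_of_subset_of_card_le (hsub S hS) (by rw [hcard S hS]; exact hV)
  exact card_le_one.mpr fun S hS S' hS' => (h_eq_V S hS).trans (h_eq_V S' hS').symm

theorem card_le_of_forall_isGreatest_of_subset_Icc {d : ℕ} {a : ℤ} {W : Finset (Finset ℤ)}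
    (hgreatest : ∀ S ∈ W, IsGreatest (S : Set ℤ) a) (hcard : ∀ S ∈ W, S.card = d)
    (hwin : ∀ S ∈ W, ∃ b : ℤ, S ⊆ Icc b (b + d)) : W.card ≤ d := by
  rcases W.eq_empty_or_nonempty with rfl | ⟨S₀, hS₀⟩
  · simp
  obtain ⟨k, rfl⟩ : ∃ k, d = k + 1 :=
    Nat.exists_eq_add_one.mpr (hcard S₀ hS₀ ▸ card_pos.mpr ⟨a, (hgreatest S₀ hS₀).1⟩)
  have hmaps : ∀ S ∈ W, S.erase a ∈ (Ico (a - (k + 1 : ℕ)) a).powersetCard k := by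
    intro S hS
    obtain ⟨haS, hle⟩ := hgreatest S hS
    obtain ⟨b, hb⟩ := hwin S hS
    have hab := mem_Icc.mp (hb haS)
    refine mem_powersetCard.mpr ⟨fun x hx => ?_, ?_⟩
    · obtain ⟨hxa, hxS⟩ := mem_erase.mp hx
      have hxb := mem_Icc.mp (hb hxS)
      have hxle : x ≤ a := hle hxS
      exact mem_Ico.mpr ⟨by omega, lt_of_le_of_ne hxle hxa⟩
    · rw [card_erase_of_mem haS, hcard S hS, Nat.add_sub_cancel]
  calc W.card ≤ ((Ico (a - (k + 1 : ℕ)) a).powersetCard k).card :=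
        card_le_card_of_injOn _ hmaps fun S hS S' hS' =>
          erase_injOn' a (hgreatest S hS).1 (hgreatest S' hS').1
    _ = k + 1 := by
        rw [card_powersetCard, Int.card_Ico, sub_sub_cancel, Int.toNat_natCast,
          Nat.choose_succ_self_right]

theorem card_le_mul_card_sub_add_one_of_subset_Icc (d : ℕ) (V : Finset ℤ) :
    ∀ W : Finset (Finset ℤ), (∀ S ∈ W, S ⊆ V) → (∀ S ∈ W, S.card = d) →
      (∀ S ∈ W, ∃ b : ℤ, S ⊆ Icc b (b + d)) → W.card ≤ d * (V.card - d) + 1 := by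
  induction V using induction_on_max with
  | empty =>
    intro W hsub hcard _
    simpa using card_le_one_of_subset_of_card_le (by simp) hsub hcard
  | insert a V hlt ih =>
    intro W hsub hcard hwin
    have haV : a ∉ V := fun h => lt_irrefl a (hlt a h)
    rw [card_insert_of_notMem haV]
    by_cases hVd : V.card < d
    · have := card_le_one_of_subset_of_card_le (V := insert a V)
        (by rw [card_insert_of_notMem haV]; omega) hsub hcard
      omega
    have h_old : (W.filter (a ∉ ·)).card ≤ d * (V.card - d) + 1 :=
      ih _ (fun S hS x hx => by
          obtain ⟨hSW, haS⟩ := mem_filter.mp hS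
          exact (mem_insert.mp (hsub S hSW hx)).resolve_left (by rintro rfl; exact haS hx))
        (fun S hS => hcard S (mem_filter.mp hS).1) (fun S hS => hwin S (mem_filter.mp hS).1)
    have h_new : (W.filter (a ∈ ·)).card ≤ d :=
      card_le_of_forall_isGreatest_of_subset_Icc
        (fun S hS => by
          obtain ⟨hSW, haS⟩ := mem_filter.mp hS
          refine ⟨haS, fun x hx => ?_⟩
          rcases mem_insert.mp (hsub S hSW hx) with rfl | hxV
          exacts [le_rfl, (hlt x hxV).le])
        (fun S hS => hcard S (mem_filter.mp hS).1) (fun S hS => hwin S (mem_filter.mp hS).1)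
    calc W.card = (W.filter (a ∈ ·)).card + (W.filter (a ∉ ·)).card :=
          (card_filter_add_card_filter_not _).symm
      _ ≤ d + (d * (V.card - d) + 1) := by omega
      _ = d * (V.card + 1 - d) + 1 := by
          rw [Nat.sub_add_comm (not_lt.mp hVd), Nat.mul_succ]; ring

end Finset

theorem stmt_15_general (d : ℕ) (E : Finset (Finset ℤ))
    (hunif : ∀ S ∈ E, S.card = d)
    (hwin : ∀ S ∈ E, ∃ a : ℤ, S ⊆ Finset.Icc a (a + (d : ℤ)))
    (v₀ : ℤ) :
    (E.filter (fun S => ∀ v ∈ S,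
        Relation.ReflTransGen (fun u w => ∃ T ∈ E, u ∈ T ∧ w ∈ T) v₀ v)).card
      ≤ d * (((E.filter (fun S => ∀ v ∈ S,
          Relation.ReflTransGen (fun u w => ∃ T ∈ E, u ∈ T ∧ w ∈ T) v₀ v)).sup id).card
            - d) + 1 :=
  Finset.card_le_mul_card_sub_add_one_of_subset_Icc d _ _
    (fun _ hS => Finset.le_sup (f := id) hS)
    (fun S hS => hunif S (Finset.mem_filter.mp hS).1)
    (fun S hS => hwin S (Finset.mem_filter.mp hS).1)

/-- Let E be a d-uniform hypergraph on a subset of ℤ each of whose edges lies in a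
window of d+1 consecutive positions. Then the connected component containing any
vertex v₀ (the edges all of whose vertices are reachable from v₀) satisfies
e(𝒲) ≤ d(|V(𝒲)| − d) + 1, where V(𝒲) is the set of non-isolated vertices of the
component. -/
theorem stmt_15 (d : ℕ) (hd : 2 ≤ d) (E : Finset (Finset ℤ))
    (hunif : ∀ S ∈ E, S.card = d)
    (hwin : ∀ S ∈ E, ∃ a : ℤ, S ⊆ Finset.Icc a (a + (d : ℤ)))
    (v₀ : ℤ) :
    (E.filter (fun S => ∀ v ∈ S,
        Relation.ReflTransGen (fun u w => ∃ T ∈ E, u ∈ T ∧ w ∈ T) v₀ v)).card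
      ≤ d * (((E.filter (fun S => ∀ v ∈ S,
          Relation.ReflTransGen (fun u w => ∃ T ∈ E, u ∈ T ∧ w ∈ T) v₀ v)).sup id).card
            - d) + 1 :=
  stmt_15_general d E hunif hwin v₀
end

section
/- Let 𝒦 be a pure d-dimensional simplicial complex on [n] whose dual graph G(𝒦) is a Hamilton cycle on the facets (a 'cyclical' complex). Then the number of facets of 𝒦 is at most C(n,d)/d. -/
/-- A pure d-dimensional simplicial complex on [n] whose dual graph is a Hamilton
cycle on its m facets (facets enumerated cyclically by g, consecutive facets sharing
exactly d vertices and non-consecutive ones fewer) has at most C(n,d)/d facets. -/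
theorem stmt_16 (n d m : ℕ) (hd : 1 ≤ d) (hm : 3 ≤ m)
    (F : Finset (Finset (Fin n))) (hFcard : F.card = m)
    (hfacet : ∀ f ∈ F, f.card = d + 1)
    (g : ZMod m → Finset (Fin n))
    (hginj : Function.Injective g) (hgF : ∀ i, g i ∈ F)
    (hcyc : ∀ i j : ZMod m, i ≠ j →
      ((g i ∩ g j).card = d ↔ (j = i + 1 ∨ j = i - 1))) :
    (m : ℝ) ≤ (n.choose d : ℝ) / (d : ℝ) := by
  haveI : NeZero m := ⟨by omega⟩
  have hone : (1 : ZMod m) ≠ 0 := by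
    have : ((1 : ℕ) : ZMod m) ≠ ((0 : ℕ) : ZMod m) := by
      rw [Ne, ZMod.natCast_eq_natCast_iff]
      simp [Nat.ModEq, Nat.mod_eq_of_lt (show 1 < m by omega)]
    simpa using this
  have hgcard : ∀ i, (g i).card = d + 1 := fun i => hfacet _ (hgF i)
  -- key: a d-set in two distinct facets forces adjacency
  have key : ∀ i j : ZMod m, i ≠ j → ∀ s : Finset (Fin n), s.card = d →
      s ⊆ g i → s ⊆ g j → (j = i + 1 ∨ j = i - 1) := by
    intro i j hij s hs hsi hsj
    have hsub : s ⊆ g i ∩ g j := Finset.subset_inter hsi hsj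
    have h1 : d ≤ (g i ∩ g j).card := hs ▸ Finset.card_le_card hsub
    have h2 : (g i ∩ g j).card ≤ d + 1 :=
      (hgcard i) ▸ Finset.card_le_card (Finset.inter_subset_left)
    have hne : (g i ∩ g j).card ≠ d + 1 := by
      intro h
      have : g i ∩ g j = g i :=
        Finset.eq_of_subset_of_card_le Finset.inter_subset_left (by rw [h, hgcard])
      have hgi : g i ⊆ g j := by rw [← this]; exact Finset.inter_subset_right
      have : g i = g j := Finset.eq_of_subset_of_card_le hgi (by rw [hgcard, hgcard])
      exact hij (hginj this)
    exact (hcyc i j hij).1 (by omega)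
  -- new d-sets introduced by facet i
  set S : ZMod m → Finset (Finset (Fin n)) :=
    fun i => ((g i).powersetCard d).filter (fun s => ¬ s ⊆ g (i - 1)) with hS
  have hScard : ∀ i, d ≤ (S i).card := by
    intro i
    have hii : i ≠ i - 1 := by
      intro h; apply hone; have := sub_eq_self.mp h.symm; simpa using this
    have hint : (g i ∩ g (i - 1)).card = d := (hcyc i (i - 1) hii).2 (Or.inr rfl)
    have hsplit := Finset.card_filter_add_card_filter_not
      (s := (g i).powersetCard d) (p := fun s => s ⊆ g (i - 1))
    have hpc : ((g i).powersetCard d).card = d + 1 := by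
      rw [Finset.card_powersetCard, hgcard i]
      simp [Nat.choose_succ_self_right]
    have hbad : (((g i).powersetCard d).filter (fun s => s ⊆ g (i - 1))).card ≤ 1 := by
      refine Finset.card_le_one.mpr ?_
      intro a ha b hb
      simp only [Finset.mem_filter, Finset.mem_powersetCard] at ha hb
      have hae : a = g i ∩ g (i - 1) :=
        Finset.eq_of_subset_of_card_le (Finset.subset_inter ha.1.1 ha.2)
          (by rw [hint, ha.1.2])
      have hbe : b = g i ∩ g (i - 1) :=
        Finset.eq_of_subset_of_card_le (Finset.subset_inter hb.1.1 hb.2)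
          (by rw [hint, hb.1.2])
      rw [hae, hbe]
    show d ≤ (((g i).powersetCard d).filter (fun s => ¬ s ⊆ g (i - 1))).card
    omega
  have hdisj : ∀ i ∈ (Finset.univ : Finset (ZMod m)), ∀ j ∈ Finset.univ, i ≠ j →
      Disjoint (S i) (S j) := by
    intro i _ j _ hij
    rw [Finset.disjoint_left]
    intro s hsi hsj
    simp only [hS, Finset.mem_filter, Finset.mem_powersetCard] at hsi hsj
    have hadj := key i j hij s hsi.1.2 hsi.1.1 hsj.1.1
    rcases hadj with h | h
    · exact hsj.2 (by rw [h, add_sub_cancel_right]; exact hsi.1.1)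
    · exact hsi.2 (h ▸ hsj.1.1)
  have hsum : m * d ≤ n.choose d := by
    calc m * d = ∑ _i : ZMod m, d := by
            simp [ZMod.card]
      _ ≤ ∑ i : ZMod m, (S i).card := Finset.sum_le_sum (fun i _ => hScard i)
      _ = ((Finset.univ : Finset (ZMod m)).biUnion S).card :=
            (Finset.card_biUnion hdisj).symm
      _ ≤ ((Finset.univ : Finset (Fin n)).powersetCard d).card := by
            apply Finset.card_le_card
            intro s hs
            simp only [Finset.mem_biUnion, hS, Finset.mem_filter,
              Finset.mem_powersetCard] at hs ⊢
            obtain ⟨i, _, ⟨_, hc⟩, _⟩ := hs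
            exact ⟨Finset.subset_univ s, hc⟩
      _ = n.choose d := by simp [Finset.card_powersetCard]
  rw [le_div_iff₀ (by positivity)]
  exact_mod_cast hsum
end

section
/- Let B ≥ 1, 0 < η, and x = B^η, and suppose a sequence of nonnegative reals (D_j^{(t)})_{2 ≤ j ≤ k+1} evolves in discrete time by the rule: at each step t, for each index j either D_j^{(t+1)} = D_j^{(t)} (if j is 'frozen') or D_j^{(t+1)} = e²·D_j^{(t)}/x^{k−j+1} (if j is 'active'), where an index j ≤ k is active at time t if and only if D_j^{(t)} ≥ D_{j+1}^{(t)}·B^{2kη}, and index k+1 is always frozen. Call j 'semi-stuck' at time t if D_j^{(t)} < D_{j+1}^{(t)}·B^{γ} for a fixed γ with kη ≤ γ. If x ≥ e² and B^{γ−kη} ≥ 1, then: whenever j is semi-stuck at time t, j is semi-stuck at time t+1. -/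
/-- Persistence of semi-stuck indices in the codegree-tracking algorithm: the
sequences D_j^{(t)} (2 ≤ j ≤ k+1) of nonnegative reals evolve so that at each step an
index j ≤ k is active iff D_j^{(t)} ≥ D_{j+1}^{(t)}·B^{2kη} (index k+1 always frozen),
active indices update by D_j^{(t+1)} = e²·D_j^{(t)}/x^{k−j+1} with x = B^η, and frozen
indices stay put. If B ≥ 1, x ≥ e², B^{γ−kη} ≥ 1 and 3kη ≤ γ, then any index j that is
semi-stuck at time t (D_j^{(t)} < D_{j+1}^{(t)}·B^γ) is still semi-stuck at time t+1. -/
theorem stmt_17 (k : ℕ) (B η γ : ℝ) (D : ℕ → ℕ → ℝ)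
    (hB : 1 ≤ B) (hη : 0 < η) (hγ : 3 * (k : ℝ) * η ≤ γ)
    (hx : Real.exp 2 ≤ B ^ η) (hBγ : (1 : ℝ) ≤ B ^ (γ - (k : ℝ) * η))
    (hnonneg : ∀ j t : ℕ, 0 ≤ D j t)
    (hEvol : ∀ t j : ℕ, 2 ≤ j → j ≤ k + 1 →
      ((j ≤ k ∧ D (j + 1) t * B ^ (2 * (k : ℝ) * η) ≤ D j t) →
        D j (t + 1) = Real.exp 2 * D j t / (B ^ η) ^ (k - j + 1)) ∧
      (¬(j ≤ k ∧ D (j + 1) t * B ^ (2 * (k : ℝ) * η) ≤ D j t) →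
        D j (t + 1) = D j t))
    (t j : ℕ) (hj2 : 2 ≤ j) (hjk : j ≤ k)
    (hsemi : D j t < D (j + 1) t * B ^ γ) :
    D j (t + 1) < D (j + 1) (t + 1) * B ^ γ := by
  have hB0 : (0:ℝ) < B := lt_of_lt_of_le one_pos hB
  have he2 : (1:ℝ) ≤ Real.exp 2 := Real.one_le_exp (by norm_num)
  have he2p : (0:ℝ) < Real.exp 2 := Real.exp_pos 2
  have hx1 : (1:ℝ) ≤ B ^ η := he2.trans hx
  have hxpos : (0:ℝ) < B ^ η := lt_of_lt_of_le one_pos hx1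
  obtain ⟨hjA, hjF⟩ := hEvol t j hj2 (by omega)
  obtain ⟨hj1A, hj1F⟩ := hEvol t (j+1) (by omega) (by omega)
  by_cases Hj : j ≤ k ∧ D (j + 1) t * B ^ (2 * (k : ℝ) * η) ≤ D j t
  · by_cases Hj1 : j + 1 ≤ k ∧ D (j + 1 + 1) t * B ^ (2 * (k : ℝ) * η) ≤ D (j + 1) t
    · -- both active
      have hm : k - j + 1 = (k - (j+1) + 1) + 1 := by omega
      rw [hjA Hj, hj1A Hj1, hm, pow_succ]
      have hxm : (0:ℝ) < (B^η)^(k - (j+1) + 1) := pow_pos hxpos _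
      rw [div_lt_iff₀ (by positivity)]
      have h2 : Real.exp 2 * D (j+1) t / (B^η)^(k - (j+1) + 1) * B ^ γ *
          ((B^η)^(k - (j+1) + 1) * (B^η))
          = Real.exp 2 * D (j+1) t * B ^ γ * (B^η) := by
        field_simp
      rw [h2]
      have hDn : (0:ℝ) ≤ D (j+1) t * B ^ γ :=
        mul_nonneg (hnonneg _ _) (Real.rpow_pos_of_pos hB0 γ).le
      nlinarith [mul_lt_mul_of_pos_left hsemi he2p,
        mul_le_mul_of_nonneg_left hx1 (mul_nonneg he2p.le hDn)]
    · -- j active, j+1 frozen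
      rw [hjA Hj, hj1F Hj1]
      have h1 : Real.exp 2 ≤ (B^η)^(k-j+1) := hx.trans (le_self_pow₀ hx1 (by omega))
      have h2 : Real.exp 2 * D j t / (B^η)^(k-j+1) ≤ D j t := by
        rw [div_le_iff₀ (pow_pos hxpos _)]
        nlinarith [hnonneg j t]
      exact lt_of_le_of_lt h2 hsemi
  · by_cases Hj1 : j + 1 ≤ k ∧ D (j + 1 + 1) t * B ^ (2 * (k : ℝ) * η) ≤ D (j + 1) t
    · -- j frozen, j+1 active
      rw [hjF Hj, hj1A Hj1]
      push_neg at Hj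
      have hfr : D j t < D (j + 1) t * B ^ (2 * (k:ℝ) * η) := Hj hjk
      set n : ℕ := k - (j+1) + 1 with hn
      have hnk : (n:ℝ) ≤ (k:ℝ) := by exact_mod_cast Nat.le_of_lt_succ (by omega)
      have hpow : ((B^η):ℝ)^n = B ^ (η * n) := by
        rw [← Real.rpow_natCast (B^η) n, ← Real.rpow_mul (le_of_lt hB0)]
      have key : (B^η)^n * B ^ (2 * (k:ℝ) * η) ≤ Real.exp 2 * B ^ γ := by
        rw [hpow, ← Real.rpow_add hB0]
        have : B ^ (η * n + 2 * (k:ℝ) * η) ≤ B ^ γ := by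
          apply Real.rpow_le_rpow_of_exponent_le hB
          nlinarith [hη.le]
        calc B ^ (η * n + 2 * (k:ℝ) * η) ≤ B ^ γ := this
          _ ≤ Real.exp 2 * B ^ γ := by nlinarith [Real.rpow_pos_of_pos hB0 γ]
      have hxn : (0:ℝ) < (B^η)^n := pow_pos hxpos _
      have hstep : D (j+1) t * B ^ (2 * (k:ℝ) * η) ≤
          Real.exp 2 * D (j+1) t / (B^η)^n * B ^ γ := by
        rw [div_mul_eq_mul_div, le_div_iff₀ hxn]
        have := mul_le_mul_of_nonneg_left key (hnonneg (j+1) t)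
        nlinarith [this]
      exact lt_of_lt_of_le hfr hstep
    · -- both frozen
      rw [hjF Hj, hj1F Hj1]; exact hsemi
end

section
/- Let G be a digraph on vertex set [n] with a loop at every vertex and two opposite arcs between every pair of distinct vertices, properly arc-coloured with n colours (each vertex is the tail of exactly one arc of each colour and the head of exactly one arc of each colour). Then the number of non-rainbow directed triangles in G (triangles on three distinct vertices with consistently directed arcs in which some colour repeats) is at most n(n−1). -/
/-!
A non-rainbow directed triangle has two consecutive arcs `x → y → z` of the same colour `c`;
rotating it, we may take these to be its first two arcs. Since colour classes are permutations,
the pair `(y, c)` determines `x` and `z`, hence the triangle, and `c` differs from the colour of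
the loop at `y`. So there are at most `n (n - 1)` such triangles.
-/

open Finset

namespace ArcColouring

variable {α κ : Type*} (φ : α → α → κ)

def rotate (t : α × α × α) : α × α × α := (t.2.1, t.2.2, t.1)

theorem eq_of_common_rotation [LinearOrder α] {t t' s : α × α × α}
    (ht : t.1 < t.2.1 ∧ t.1 < t.2.2) (ht' : t'.1 < t'.2.1 ∧ t'.1 < t'.2.2)
    (hs : s = t ∨ s = rotate t ∨ s = rotate (rotate t))
    (hs' : s = t' ∨ s = rotate t' ∨ s = rotate (rotate t')) : t = t' := by
  obtain ⟨a, b, c⟩ := t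
  obtain ⟨a', b', c'⟩ := t'
  simp only [rotate] at ht ht' hs hs'
  obtain ⟨hab, hac⟩ := ht
  obtain ⟨hab', hac'⟩ := ht'
  rcases hs with rfl | rfl | rfl <;> rcases hs' with h | h | h <;>
    simp only [Prod.mk.injEq] at h <;> obtain ⟨rfl, rfl, rfl⟩ := h <;> first | rfl | order

def monoPaths [Fintype α] [DecidableEq α] [DecidableEq κ] : Finset (α × α × α) :=
  univ.filter fun t => t.1 ≠ t.2.1 ∧ φ t.1 t.2.1 = φ t.2.1 t.2.2

variable {φ}

theorem eq_of_monoPath_colour_eq (hout : ∀ v, Function.Injective (φ v))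
    (hin : ∀ v, Function.Injective fun w => φ w v) {x x' y z z' : α}
    (h : φ x y = φ y z) (h' : φ x' y = φ y z') (hc : φ x y = φ x' y) : x = x' ∧ z = z' :=
  ⟨hin y hc, hout y (h.symm.trans (hc.trans h'))⟩

theorem card_monoPaths_le [Fintype α] [DecidableEq α] [Fintype κ] [DecidableEq κ]
    (hout : ∀ v, Function.Injective (φ v)) (hin : ∀ v, Function.Injective fun w => φ w v) :
    #(monoPaths φ) ≤ Fintype.card α * (Fintype.card κ - 1) := by
  calc #(monoPaths φ)
      ≤ #((univ : Finset α).sigma fun y => univ.erase (φ y y)) := by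
        refine card_le_card_of_injOn (fun t => ⟨t.2.1, φ t.1 t.2.1⟩) ?_ ?_
        · rintro ⟨x, y, z⟩ hp
          simp only [monoPaths, mem_coe, mem_filter, mem_univ, true_and] at hp
          simpa using fun h => hp.1 (hin y h)
        · rintro ⟨x, y, z⟩ hp ⟨x', y', z'⟩ hp' he
          simp only [monoPaths, mem_coe, mem_filter, mem_univ, true_and] at hp hp'
          simp only [Sigma.mk.injEq] at he
          obtain ⟨rfl, hc⟩ := he
          obtain ⟨rfl, rfl⟩ := eq_of_monoPath_colour_eq hout hin hp.2 hp'.2 (eq_of_heq hc)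
          rfl
    _ = Fintype.card α * (Fintype.card κ - 1) := by simp [card_sigma]

variable (φ) in
def pathOfTriangle [DecidableEq κ] (t : α × α × α) : α × α × α :=
  if φ t.1 t.2.1 = φ t.2.1 t.2.2 then t
  else if φ t.2.1 t.2.2 = φ t.2.2 t.1 then rotate t
  else rotate (rotate t)

theorem pathOfTriangle_eq_rotation [DecidableEq κ] (t : α × α × α) :
    pathOfTriangle φ t = t ∨ pathOfTriangle φ t = rotate t ∨
      pathOfTriangle φ t = rotate (rotate t) := by
  unfold pathOfTriangle
  split_ifs <;> simp

theorem pathOfTriangle_mem_monoPaths [Fintype α] [DecidableEq α] [DecidableEq κ] {a b c : α}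
    (hab : a ≠ b) (hbc : b ≠ c) (hca : c ≠ a)
    (h : φ a b = φ b c ∨ φ b c = φ c a ∨ φ a b = φ c a) :
    pathOfTriangle φ (a, b, c) ∈ monoPaths φ := by
  unfold pathOfTriangle
  split_ifs with h₁ h₂ <;> simp only [monoPaths, rotate, mem_filter, mem_univ, true_and]
  · exact ⟨hab, h₁⟩
  · exact ⟨hbc, h₂⟩
  · exact ⟨hca, by tauto⟩

end ArcColouring

open ArcColouring

/-- In a properly n-arc-coloured complete loopy digraph on [n], the number of
non-rainbow directed triangles is at most n(n−1). Directed triangles are counted as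
cyclic objects, via the canonical representative whose first vertex is smallest. -/
theorem stmt_18 (n : ℕ) (φ : Fin n → Fin n → Fin n)
    (hout : ∀ v : Fin n, Function.Injective fun w => φ v w)
    (hin : ∀ v : Fin n, Function.Injective fun w => φ w v) :
    ((Finset.univ : Finset (Fin n × Fin n × Fin n)).filter (fun t =>
        t.1 < t.2.1 ∧ t.1 < t.2.2 ∧ t.2.1 ≠ t.2.2 ∧
          (φ t.1 t.2.1 = φ t.2.1 t.2.2 ∨ φ t.2.1 t.2.2 = φ t.2.2 t.1 ∨
            φ t.1 t.2.1 = φ t.2.2 t.1))).card ≤ n * (n - 1) := by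
  refine (card_le_card_of_injOn (pathOfTriangle φ) ?_ ?_).trans
    ((card_monoPaths_le hout hin).trans_eq (by simp))
  · rintro ⟨a, b, c⟩ ht
    simp only [mem_coe, mem_filter, mem_univ, true_and] at ht
    obtain ⟨hab, hac, hbc, hrep⟩ := ht
    exact pathOfTriangle_mem_monoPaths hab.ne hbc hac.ne' hrep
  · intro t ht t' ht' he
    simp only [mem_coe, mem_filter, mem_univ, true_and] at ht ht'
    exact eq_of_common_rotation ⟨ht.1, ht.2.1⟩ ⟨ht'.1, ht'.2.1⟩
      (pathOfTriangle_eq_rotation t) (he ▸ pathOfTriangle_eq_rotation t')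
end
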